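/- Let ψ : 𝔫⁺ → ℂ be a Lie algebra homomorphism with ψ(L_1) ≠ 0, ψ(L_2) ≠ 0, ψ(I_1) ≠ 0, let V be a Whittaker module of type ψ for 𝒱, and let S ⊆ V be a nonzero 𝒱-submodule. Then S contains a nonzero Whittaker vector of type ψ. -/

import Mathlib

/-!
Common setup: the twisted Heisenberg–Virasoro algebra `𝒱`, its subalgebra `𝔫⁺`,
the universal Whittaker module `M_ψ`, the quotients `L_{ψ,ξ}`, and the notions of
Whittaker vectors/modules, degrees, etc.
-/

open UniversalEnvelopingAlgebra

attribute [local instance 100] LieRing.ofAssociativeRing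

/-- The twisted Heisenberg–Virasoro algebra: a complex Lie algebra with basis
`{L k, I k (k : ℤ), z 0, z 1, z 2}` (here `z 0, z 1, z 2` are the paper's `z₁, z₂, z₃`)
and the prescribed brackets. -/
class THV (V : Type) [LieRing V] [LieAlgebra ℂ V] : Type where
  L : ℤ → V
  I : ℤ → V
  z : Fin 3 → V
  basis : Module.Basis (ℤ ⊕ ℤ ⊕ Fin 3) ℂ V
  basis_L : ∀ k : ℤ, basis (Sum.inl k) = L k
  basis_I : ∀ k : ℤ, basis (Sum.inr (Sum.inl k)) = I k
  basis_z : ∀ i : Fin 3, basis (Sum.inr (Sum.inr i)) = z i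
  lie_LL : ∀ k j : ℤ, ⁅L k, L j⁆ =
    ((j : ℂ) - (k : ℂ)) • L (k + j) +
      (if j = -k then ((k : ℂ) ^ 3 - (k : ℂ)) / 12 else 0) • z 0
  lie_LI : ∀ k j : ℤ, ⁅L k, I j⁆ =
    (j : ℂ) • I (k + j) + (if j = -k then (k : ℂ) ^ 2 - (k : ℂ) else 0) • z 1
  lie_II : ∀ k j : ℤ, ⁅I k, I j⁆ = (if j = -k then (k : ℂ) else 0) • z 2
  lie_z : ∀ i : Fin 3, ∀ x : V, ⁅z i, x⁆ = 0

namespace THV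

variable (V : Type) [LieRing V] [LieAlgebra ℂ V] [THV V]

/-- `𝔫⁺ = span {L k, I k : k ≥ 1}` (a Lie subalgebra of `𝒱`). -/
def nPlus : LieSubalgebra ℂ V :=
  LieSubalgebra.lieSpan ℂ V {x | ∃ k : ℤ, 1 ≤ k ∧ (x = L k ∨ x = I k)}

theorem L_mem_nPlus {k : ℤ} (h : 1 ≤ k) : (L k : V) ∈ nPlus V :=
  LieSubalgebra.subset_lieSpan ⟨k, h, Or.inl rfl⟩

theorem I_mem_nPlus {k : ℤ} (h : 1 ≤ k) : (I k : V) ∈ nPlus V :=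
  LieSubalgebra.subset_lieSpan ⟨k, h, Or.inr rfl⟩

/-- A Whittaker vector of type `ψ` in a `𝒱`-module `W`. -/
def IsWhittakerVector (ψ : nPlus V →ₗ⁅ℂ⁆ ℂ) {W : Type} [AddCommGroup W] [Module ℂ W]
    [LieRingModule V W] (w : W) : Prop :=
  ∀ x : nPlus V, ⁅(x : V), w⁆ = ψ x • w

/-- The universal enveloping algebra `U(𝒱)`. -/
abbrev UEA := UniversalEnvelopingAlgebra ℂ V

/-- The canonical embedding `𝒱 → U(𝒱)`. -/
noncomputable def ιV : V →ₗ⁅ℂ⁆ UEA V := UniversalEnvelopingAlgebra.ι ℂ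

/-- The four central elements `z₀ = I₀, z₁, z₂, z₃` of `U(𝒱)`. -/
noncomputable def zElt : Fin 4 → UEA V
  | 0 => ιV V (I 0)
  | 1 => ιV V (z 0)
  | 2 => ιV V (z 1)
  | 3 => ιV V (z 2)

/-- The left ideal of `U(𝒱)` generated by `{x - ψ(x) : x ∈ 𝔫⁺}`;
`M_ψ = U(𝒱) ⊗_{U(𝔫⁺)} ℂ_ψ` is canonically the quotient by this left ideal. -/
noncomputable def whittakerIdeal (ψ : nPlus V →ₗ⁅ℂ⁆ ℂ) : Submodule (UEA V) (UEA V) :=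
  Submodule.span (UEA V)
    {u | ∃ x : nPlus V, u = ιV V (x : V) - algebraMap ℂ (UEA V) (ψ x)}

/-- The universal Whittaker module `M_ψ`. -/
abbrev Mpsi (ψ : nPlus V →ₗ⁅ℂ⁆ ℂ) := (UEA V) ⧸ whittakerIdeal V ψ

/-- Any quotient of `U(𝒱)` (as a left module over itself) is a `𝒱`-module. -/
noncomputable instance (p : Submodule (UEA V) (UEA V)) : LieRingModule V ((UEA V) ⧸ p) :=
  letI : LieRingModule (UEA V) ((UEA V) ⧸ p) := LieRingModule.ofAssociativeModule
  LieRingModule.compLieHom _ (ιV V)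

noncomputable instance (p : Submodule (UEA V) (UEA V)) : LieModule ℂ V ((UEA V) ⧸ p) :=
  letI : LieRingModule (UEA V) ((UEA V) ⧸ p) := LieRingModule.ofAssociativeModule
  letI : LieModule ℂ (UEA V) ((UEA V) ⧸ p) := LieModule.ofAssociativeModule
  LieModule.compLieHom _ (ιV V)

/-- The cyclic Whittaker vector `w = 1 ⊗ 1` of `M_ψ`. -/
noncomputable def mw (ψ : nPlus V →ₗ⁅ℂ⁆ ℂ) : Mpsi V ψ :=
  Submodule.Quotient.mk 1

/-- The submodule `Σ_{i} (z_i − ξ_i·1) M_ψ` of `M_ψ`. -/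
noncomputable def centralSub (ψ : nPlus V →ₗ⁅ℂ⁆ ℂ) (ξ : Fin 4 → ℂ) :
    Submodule (UEA V) (Mpsi V ψ) :=
  Submodule.span (UEA V)
    {m | ∃ i : Fin 4, ∃ y : Mpsi V ψ, m = (zElt V i - algebraMap ℂ (UEA V) (ξ i)) • y}

/-- The Whittaker module `L_{ψ,ξ} = M_ψ / Σᵢ (z_i − ξ_i·1) M_ψ`. -/
abbrev Lpsixi (ψ : nPlus V →ₗ⁅ℂ⁆ ℂ) (ξ : Fin 4 → ℂ) :=
  Mpsi V ψ ⧸ centralSub V ψ ξ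

noncomputable instance (ψ : nPlus V →ₗ⁅ℂ⁆ ℂ) (q : Submodule (UEA V) (Mpsi V ψ)) :
    LieRingModule V ((Mpsi V ψ) ⧸ q) :=
  letI : LieRingModule (UEA V) ((Mpsi V ψ) ⧸ q) := LieRingModule.ofAssociativeModule
  LieRingModule.compLieHom _ (ιV V)

noncomputable instance (ψ : nPlus V →ₗ⁅ℂ⁆ ℂ) (q : Submodule (UEA V) (Mpsi V ψ)) :
    LieModule ℂ V ((Mpsi V ψ) ⧸ q) :=
  letI : LieRingModule (UEA V) ((Mpsi V ψ) ⧸ q) := LieRingModule.ofAssociativeModule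
  letI : LieModule ℂ (UEA V) ((Mpsi V ψ) ⧸ q) := LieModule.ofAssociativeModule
  LieModule.compLieHom _ (ιV V)

/-- The image `w̄` of the cyclic Whittaker vector in `L_{ψ,ξ}`. -/
noncomputable def lw (ψ : nPlus V →ₗ⁅ℂ⁆ ℂ) (ξ : Fin 4 → ℂ) : Lpsixi V ψ ξ :=
  Submodule.Quotient.mk (mw V ψ)

/-- The size `|λ|` of a pseudopartition recorded as its multiplicity function. -/
def pdeg (f : ℕ →₀ ℕ) : ℕ := f.sum fun k m => k * m

/-- `L_{-λ} = L_{-λ_s} ⋯ L_{-λ_1} = ⋯ L_{-1}^{λ(1)} L_0^{λ(0)} ∈ U(𝒱)`,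
for a pseudopartition `λ` given by its multiplicity function. -/
noncomputable def Lword (lam : ℕ →₀ ℕ) : UEA V :=
  (((List.range (lam.support.sup id + 1)).reverse).map
    fun k : ℕ => (ιV V (L (-(k : ℤ)))) ^ (lam k)).prod

/-- `I_{-μ} = I_{-μ_r} ⋯ I_{-μ_1} = ⋯ I_{-2}^{μ(2)} I_{-1}^{μ(1)} ∈ U(𝒱)`. -/
noncomputable def Iword (mu : ℕ →₀ ℕ) : UEA V :=
  (((List.range (mu.support.sup id + 1)).reverse).map
    fun k : ℕ => (ιV V (I (-(k : ℤ)))) ^ (mu k)).prod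

/-- `z^t = z₀^{t₀} z₁^{t₁} z₂^{t₂} z₃^{t₃} ∈ U(𝒱)`. -/
noncomputable def zword (t : Fin 4 → ℕ) : UEA V :=
  ((List.finRange 4).map fun i => (zElt V i) ^ (t i)).prod

/-- Index type for the PBW-type basis of `M_ψ`: a 4-tuple `t`, a pseudopartition `λ`,
and a partition `μ` (a multiplicity function with `μ(0) = 0`). -/
abbrev WIdx : Type := (Fin 4 → ℕ) × (ℕ →₀ ℕ) × {g : ℕ →₀ ℕ // g 0 = 0}

/-- The property that `B` is the standard basis `{z^t L_{-λ} I_{-μ} w}` of `M_ψ`. -/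
def IsStdBasis (ψ : nPlus V →ₗ⁅ℂ⁆ ℂ) (B : Module.Basis WIdx ℂ (Mpsi V ψ)) : Prop :=
  ∀ (t : Fin 4 → ℕ) (lam : ℕ →₀ ℕ) (mu : {g : ℕ →₀ ℕ // g 0 = 0}),
    B (t, lam, mu) = (zword V t * Lword V lam * Iword V mu.1) • mw V ψ

/-- `maxdeg` of a vector of `M_ψ` with respect to the standard basis
(`⊥` plays the role of `-∞`). -/
noncomputable def maxdeg (ψ : nPlus V →ₗ⁅ℂ⁆ ℂ) (B : Module.Basis WIdx ℂ (Mpsi V ψ))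
    (v : Mpsi V ψ) : WithBot ℤ :=
  ((B.repr v).support.image fun p => ((pdeg p.2.1 : ℤ) + (pdeg p.2.2.1 : ℤ))).max

/-- `max_{L_0}` of a vector of `M_ψ`: the largest `λ(0)` over basis vectors occurring
with a nonzero coefficient. -/
noncomputable def maxL0 (ψ : nPlus V →ₗ⁅ℂ⁆ ℂ) (B : Module.Basis WIdx ℂ (Mpsi V ψ))
    (v : Mpsi V ψ) : WithBot ℤ :=
  ((B.repr v).support.image fun p => (p.2.1 0 : ℤ)).max

end THV

/-!
For `x ∈ 𝔫⁺` write `T_x = x - ψ(x)`. Since `W` is generated by a Whittaker vector, it is spanned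
by the words `a₁ ⋯ aₙ · w` in the letters `L_{-n}`, `I_{-n}` (`n ≥ 0`) and `z_i`. Rank a letter
`L_{-n}` or `I_{-n}` by its weight `n`, with the number of letters `L_0` as a lexicographic
tie-break; ranking words by the sum gives an exhaustive well-ordered filtration of `W`. For a
generator `x = L_j` or `I_j` (`j ≥ 1`), `T_x` strictly lowers the rank: commuting `x` past the
first letter of a word produces letters of smaller rank, or generators of `𝔫⁺` acting on a shorter
word, where they act by `ψ` up to lower terms. Hence a nonzero vector of `S` of minimal rank is
killed by every `T_x`.
-/

theorem exists_ne_zero_forall_eq_zero_of_lowering {ι κ M : Type*} [Preorder ι] [WellFoundedLT ι]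
    [Zero M] (F : ι → Set M) (T : κ → M → M) {S : Set M} (hS : ∃ v ∈ S, v ≠ 0)
    (hF : ∀ v ∈ S, ∃ p, v ∈ F p) (hTS : ∀ i, ∀ v ∈ S, T i v ∈ S)
    (hT : ∀ i p, ∀ v ∈ F p, T i v = 0 ∨ ∃ q < p, T i v ∈ F q) :
    ∃ v ∈ S, v ≠ 0 ∧ ∀ i, T i v = 0 := by
  obtain ⟨v, hvS, hv⟩ := hS
  obtain ⟨p, hp⟩ := hF v hvS
  obtain ⟨p₀, ⟨v₀, hv₀S, hv₀, hv₀F⟩, hmin⟩ :=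
    wellFounded_lt.has_min {p | ∃ v ∈ S, v ≠ 0 ∧ v ∈ F p} ⟨p, v, hvS, hv, hp⟩
  refine ⟨v₀, hv₀S, hv₀, fun i => by_contra fun hne => ?_⟩
  obtain ⟨q, hq, hqF⟩ := (hT i p₀ v₀ hv₀F).resolve_left hne
  exact hmin q ⟨_, hTS i v₀ hv₀S, hne, hqF⟩ hq

theorem LieSubalgebra.lie_eq_smul_of_forall_mem_lieSpan {R L M : Type*} [CommRing R] [LieRing L]
    [LieAlgebra R L] [AddCommGroup M] [Module R M] [LieRingModule L M] [LieModule R L M]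
    {s : Set L} (χ : lieSpan R L s →ₗ⁅R⁆ R) {m : M}
    (h : ∀ x (hx : x ∈ s), ⁅x, m⁆ = χ ⟨x, subset_lieSpan hx⟩ • m) (x : lieSpan R L s) :
    ⁅(x : L), m⁆ = χ x • m := by
  obtain ⟨x, hx⟩ := x
  induction hx using lieSpan_induction with
  | mem x hx => exact h x hx
  | zero =>
    rw [zero_lie, show (⟨0, _⟩ : lieSpan R L s) = 0 from rfl, map_zero, zero_smul]
  | add x y hx hy ihx ihy =>
    rw [add_lie, ihx, ihy, ← add_smul, ← map_add]
    rfl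
  | smul c x hx ih =>
    rw [smul_lie, ih, smul_smul, ← smul_eq_mul, ← map_smul]
    rfl
  | lie x y hx hy ihx ihy =>
    have hχ : χ ⟨⁅x, y⁆, lie_mem _ hx hy⟩ = 0 := by
      rw [show (⟨⁅x, y⁆, _⟩ : lieSpan R L s) = ⁅(⟨x, hx⟩ : lieSpan R L s), ⟨y, hy⟩⁆ from rfl,
        LieHom.map_lie, Ring.lie_def, mul_comm, sub_self]
    rw [hχ, zero_smul, lie_lie, ihx, ihy, lie_smul, lie_smul, ihx, ihy, smul_comm, sub_self]

theorem lie_mem_span_of_basis {R L M ι : Type*} [CommRing R] [LieRing L] [LieAlgebra R L]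
    [AddCommGroup M] [Module R M] [LieRingModule L M] [LieModule R L M] (b : Module.Basis ι R L)
    {s : Set M} (h : ∀ i, ∀ m ∈ s, ⁅b i, m⁆ ∈ Submodule.span R s) (x : L) {m : M}
    (hm : m ∈ Submodule.span R s) : ⁅x, m⁆ ∈ Submodule.span R s := by
  have hx : x ∈ Submodule.span R (Set.range b) := b.span_eq ▸ Submodule.mem_top
  induction hm using Submodule.span_induction with
  | mem m hm =>
    induction hx using Submodule.span_induction with
    | mem y hy => obtain ⟨i, rfl⟩ := hy; exact h i m hm
    | zero => simp
    | add y y' _ _ hy hy' => rw [add_lie]; exact add_mem hy hy'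
    | smul c y _ hy => rw [smul_lie]; exact Submodule.smul_mem _ c hy
  | zero => simp
  | add m m' _ _ hm hm' => rw [lie_add]; exact add_mem hm hm'
  | smul c m _ hm => rw [lie_smul]; exact Submodule.smul_mem _ c hm

namespace THV

variable (V : Type) [LieRing V] [LieAlgebra ℂ V] [THV V]

/-- `nPlus V` is by definition `lieSpan ℂ V (gens V)`. -/
def gens : Set V := {x | ∃ k : ℤ, 1 ≤ k ∧ (x = L k ∨ x = I k)}

theorem L_mem_gens {k : ℤ} (hk : 1 ≤ k) : (L k : V) ∈ gens V := ⟨k, hk, Or.inl rfl⟩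

theorem I_mem_gens {k : ℤ} (hk : 1 ≤ k) : (I k : V) ∈ gens V := ⟨k, hk, Or.inr rfl⟩

theorem mem_nPlus_of_mem_gens {x : V} (hx : x ∈ gens V) : x ∈ nPlus V :=
  LieSubalgebra.subset_lieSpan hx

inductive Letter where
  | Ln : ℕ → Letter
  | In : ℕ → Letter
  | Zl : Fin 3 → Letter

namespace Letter

def toV : Letter → V
  | Ln n => L (-(n : ℤ))
  | In n => I (-(n : ℤ))
  | Zl i => z i

/-- `L_0` gets secondary rank `1`: in `[I_j, L_0] = -j I_j` the `ψ(I_j)`-part does not lower the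
weight. -/
def rank : Letter → ℕ ×ₗ ℕ
  | Ln n => toLex (n, if n = 0 then 1 else 0)
  | In n => toLex (n, 0)
  | Zl _ => 0

theorem rank_Ln_pos (n : ℕ) : 0 < (Ln n).rank := by
  rw [rank, Prod.Lex.lt_iff]
  rcases n with _ | n <;> simp

theorem rank_In_pos {n : ℕ} (hn : 0 < n) : 0 < (In n).rank :=
  Prod.Lex.lt_iff.2 (Or.inl hn)

end Letter

open Letter

theorem L_eq_toV_of_nonpos {k : ℤ} (hk : k ≤ 0) : (L k : V) = (Ln (-k).toNat).toV V := by
  simp only [toV]; congr; omega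

theorem I_eq_toV_of_nonpos {k : ℤ} (hk : k ≤ 0) : (I k : V) = (In (-k).toNat).toV V := by
  simp only [toV]; congr; omega

/-- A generator of `𝔫⁺` counts as below every positive rank: on a word it acts by a scalar
modulo words of smaller rank. -/
def belowRank (r : ℕ ×ₗ ℕ) : Set V :=
  {x | (∃ b : Letter, b.rank < r ∧ x = b.toV V) ∨ (0 < r ∧ x ∈ gens V)}

section belowRank

variable {V}
variable {r : ℕ ×ₗ ℕ}

theorem toV_mem_span_belowRank {b : Letter} (h : b.rank < r) :
    b.toV V ∈ Submodule.span ℂ (belowRank V r) :=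
  Submodule.subset_span (Or.inl ⟨b, h, rfl⟩)

theorem mem_span_belowRank_of_mem_gens (hr : 0 < r) {x : V} (hx : x ∈ gens V) :
    x ∈ Submodule.span ℂ (belowRank V r) :=
  Submodule.subset_span (Or.inr ⟨hr, hx⟩)

theorem L_mem_span_belowRank (hr : 0 < r) {k : ℤ} (hk : k ≤ 0 → (-k).toNat < (ofLex r).1) :
    (L k : V) ∈ Submodule.span ℂ (belowRank V r) := by
  rcases le_or_gt k 0 with hk0 | hk0
  · rw [L_eq_toV_of_nonpos V hk0]
    exact toV_mem_span_belowRank (Prod.Lex.lt_iff.2 (Or.inl (hk hk0)))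
  · exact mem_span_belowRank_of_mem_gens hr (L_mem_gens V hk0)

theorem I_mem_span_belowRank (hr : 0 < r) {k : ℤ} (hk : k ≤ 0 → (-k).toNat < (ofLex r).1) :
    (I k : V) ∈ Submodule.span ℂ (belowRank V r) := by
  rcases le_or_gt k 0 with hk0 | hk0
  · rw [I_eq_toV_of_nonpos V hk0]
    exact toV_mem_span_belowRank (Prod.Lex.lt_iff.2 (Or.inl (hk hk0)))
  · exact mem_span_belowRank_of_mem_gens hr (I_mem_gens V hk0)

theorem z_mem_span_belowRank (hr : 0 < r) (i : Fin 3) :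
    (z i : V) ∈ Submodule.span ℂ (belowRank V r) :=
  toV_mem_span_belowRank (b := Zl i) hr

theorem lie_L_mem_span_belowRank {j : ℤ} (hj : 1 ≤ j) (a : Letter) :
    ⁅(L j : V), a.toV V⁆ ∈ Submodule.span ℂ (belowRank V a.rank) := by
  cases a with
  | Ln n =>
    have hr := rank_Ln_pos n
    rw [toV, lie_LL]
    exact add_mem (Submodule.smul_mem _ _ (L_mem_span_belowRank hr (by simp [rank]; omega)))
      (Submodule.smul_mem _ _ (z_mem_span_belowRank hr 0))
  | In n =>
    rcases Nat.eq_zero_or_pos n with rfl | hn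
    · have hj0 : (0 : ℤ) ≠ -j := by omega
      simp [toV, lie_LI, hj0]
    have hr := rank_In_pos hn
    rw [toV, lie_LI]
    exact add_mem (Submodule.smul_mem _ _ (I_mem_span_belowRank hr (by simp [rank]; omega)))
      (Submodule.smul_mem _ _ (z_mem_span_belowRank hr 1))
  | Zl i => rw [toV, ← lie_skew, lie_z, neg_zero]; exact zero_mem _

theorem lie_I_mem_span_belowRank {j : ℤ} (hj : 1 ≤ j) (a : Letter) :
    ⁅(I j : V), a.toV V⁆ ∈ Submodule.span ℂ (belowRank V a.rank) := by
  cases a with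
  | Ln n =>
    have hr := rank_Ln_pos n
    rw [toV, ← lie_skew, lie_LI]
    exact neg_mem (add_mem
      (Submodule.smul_mem _ _ (I_mem_span_belowRank hr (by simp [rank]; omega)))
      (Submodule.smul_mem _ _ (z_mem_span_belowRank hr 1)))
  | In n =>
    rcases Nat.eq_zero_or_pos n with rfl | hn
    · have hj0 : (0 : ℤ) ≠ -j := by omega
      simp [toV, lie_II, hj0]
    rw [toV, lie_II]
    exact Submodule.smul_mem _ _ (z_mem_span_belowRank (rank_In_pos hn) 2)
  | Zl i => rw [toV, ← lie_skew, lie_z, neg_zero]; exact zero_mem _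

theorem lie_mem_span_belowRank {g : V} (hg : g ∈ gens V) (a : Letter) :
    ⁅g, a.toV V⁆ ∈ Submodule.span ℂ (belowRank V a.rank) := by
  obtain ⟨j, hj, rfl | rfl⟩ := hg
  · exact lie_L_mem_span_belowRank hj a
  · exact lie_I_mem_span_belowRank hj a

end belowRank

theorem basis_eq_toV_or_mem_gens (i : ℤ ⊕ ℤ ⊕ Fin 3) :
    (∃ a : Letter, basis i = a.toV V) ∨ (basis i : V) ∈ gens V := by
  rcases i with k | k | i
  · rw [basis_L]
    rcases le_or_gt k 0 with hk | hk
    · exact Or.inl ⟨_, L_eq_toV_of_nonpos V hk⟩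
    · exact Or.inr (L_mem_gens V hk)
  · rw [basis_I]
    rcases le_or_gt k 0 with hk | hk
    · exact Or.inl ⟨_, I_eq_toV_of_nonpos V hk⟩
    · exact Or.inr (I_mem_gens V hk)
  · exact Or.inl ⟨Zl i, basis_z i⟩

section Words

variable {W : Type} [AddCommGroup W] [Module ℂ W] [LieRingModule V W]

def actWord (w : W) (l : List Letter) : W :=
  l.foldr (fun a v => ⁅a.toV V, v⁆) w

def wordRank (l : List Letter) : ℕ ×ₗ ℕ :=
  (l.map Letter.rank).sum

theorem wordRank_cons (a : Letter) (l : List Letter) :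
    wordRank (a :: l) = a.rank + wordRank l := by
  simp [wordRank]

def wordFiltration (w : W) (p : ℕ ×ₗ ℕ) : Submodule ℂ W :=
  Submodule.span ℂ (actWord V w '' {l | wordRank l ≤ p})

def wordFiltrationLT (w : W) (p : ℕ ×ₗ ℕ) : Submodule ℂ W :=
  Submodule.span ℂ (actWord V w '' {l | wordRank l < p})

variable (w : W)

theorem actWord_mem_wordFiltration {l : List Letter} {p : ℕ ×ₗ ℕ} (h : wordRank l ≤ p) :
    actWord V w l ∈ wordFiltration V w p :=
  Submodule.subset_span ⟨l, h, rfl⟩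

theorem actWord_mem_wordFiltrationLT {l : List Letter} {p : ℕ ×ₗ ℕ} (h : wordRank l < p) :
    actWord V w l ∈ wordFiltrationLT V w p :=
  Submodule.subset_span ⟨l, h, rfl⟩

theorem wordFiltration_mono : Monotone (wordFiltration V w) :=
  fun _ _ h => Submodule.span_mono (Set.image_mono fun _ hl => le_trans hl h)

theorem wordFiltrationLT_mono : Monotone (wordFiltrationLT V w) :=
  fun _ _ h => Submodule.span_mono (Set.image_mono fun _ hl => lt_of_lt_of_le hl h)

theorem eq_zero_or_exists_lt_of_mem_wordFiltrationLT {p : ℕ ×ₗ ℕ} {v : W}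
    (hv : v ∈ wordFiltrationLT V w p) : v = 0 ∨ ∃ q < p, v ∈ wordFiltration V w q := by
  induction hv using Submodule.span_induction with
  | mem v hv =>
    obtain ⟨l, hl, rfl⟩ := hv
    exact Or.inr ⟨wordRank l, hl, actWord_mem_wordFiltration V w le_rfl⟩
  | zero => exact Or.inl rfl
  | add u v _ _ hu hv =>
    rcases hu with rfl | ⟨q, hq, hu⟩
    · simpa using hv
    rcases hv with rfl | ⟨q', hq', hv⟩
    · rw [add_zero]; exact Or.inr ⟨q, hq, hu⟩
    exact Or.inr ⟨max q q', max_lt hq hq', add_mem (wordFiltration_mono V w (le_max_left _ _) hu)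
      (wordFiltration_mono V w (le_max_right _ _) hv)⟩
  | smul c v _ hv =>
    rcases hv with rfl | ⟨q, hq, hv⟩
    · simp
    · exact Or.inr ⟨q, hq, Submodule.smul_mem _ c hv⟩

variable [LieModule ℂ V W]

theorem lie_mem_wordFiltrationLT (a : Letter) {p : ℕ ×ₗ ℕ} {v : W}
    (hv : v ∈ wordFiltrationLT V w p) : ⁅a.toV V, v⁆ ∈ wordFiltrationLT V w (a.rank + p) := by
  have : wordFiltrationLT V w p ≤
      (wordFiltrationLT V w (a.rank + p)).comap (LieModule.toEnd ℂ V W (a.toV V)) := by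
    refine Submodule.span_le.2 ?_
    rintro _ ⟨l, hl : wordRank l < p, rfl⟩
    refine actWord_mem_wordFiltrationLT V w (l := a :: l) ?_
    rw [wordRank_cons]
    exact add_lt_add_right hl _
  exact this hv

variable (ψ : nPlus V →ₗ⁅ℂ⁆ ℂ)

def lieSubSmul (x : nPlus V) : Module.End ℂ W :=
  LieModule.toEnd ℂ V W x - ψ x • LinearMap.id

theorem lieSubSmul_apply (x : nPlus V) (v : W) : lieSubSmul V ψ x v = ⁅(x : V), v⁆ - ψ x • v :=
  rfl

theorem lie_eq_lieSubSmul_add (x : nPlus V) (v : W) :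
    ⁅(x : V), v⁆ = lieSubSmul V ψ x v + ψ x • v := by
  rw [lieSubSmul_apply, sub_add_cancel]

variable {V w ψ}

theorem lie_actWord_mem_of_mem_span_belowRank {l : List Letter}
    (hlower : ∀ x : nPlus V, (x : V) ∈ gens V →
      lieSubSmul V ψ x (actWord V w l) ∈ wordFiltrationLT V w (wordRank l))
    {r : ℕ ×ₗ ℕ} {y : V} (hy : y ∈ Submodule.span ℂ (belowRank V r)) :
    ⁅y, actWord V w l⁆ ∈ wordFiltrationLT V w (r + wordRank l) := by
  induction hy using Submodule.span_induction with
  | mem y hy =>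
    rcases hy with ⟨b, hb, rfl⟩ | ⟨hr, hy⟩
    · refine actWord_mem_wordFiltrationLT V w (l := b :: l) ?_
      rw [wordRank_cons]
      exact add_lt_add_left hb _
    · rw [lie_eq_lieSubSmul_add V ψ ⟨y, mem_nPlus_of_mem_gens V hy⟩]
      exact add_mem (wordFiltrationLT_mono V w (lt_add_of_pos_left _ hr).le (hlower _ hy))
        (Submodule.smul_mem _ _
          (actWord_mem_wordFiltrationLT V w (lt_add_of_pos_left _ hr)))
  | zero => simp
  | add y y' _ _ hy hy' => rw [add_lie]; exact add_mem hy hy'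
  | smul c y _ hy => rw [smul_lie]; exact Submodule.smul_mem _ c hy

theorem lieSubSmul_actWord_mem_wordFiltrationLT (hw : IsWhittakerVector V ψ w)
    (l : List Letter) : ∀ x : nPlus V, (x : V) ∈ gens V →
      lieSubSmul V ψ x (actWord V w l) ∈ wordFiltrationLT V w (wordRank l) := by
  induction l with
  | nil => intro x _; simp [lieSubSmul_apply, actWord, hw x]
  | cons a l ih =>
    intro x hx
    have hleibniz : lieSubSmul V ψ x (actWord V w (a :: l)) =
        ⁅⁅(x : V), a.toV V⁆, actWord V w l⁆ + ⁅a.toV V, lieSubSmul V ψ x (actWord V w l)⁆ := by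
      rw [lieSubSmul_apply, lieSubSmul_apply, actWord, List.foldr_cons, leibniz_lie, lie_sub,
        lie_smul]
      abel
    rw [hleibniz, wordRank_cons]
    exact add_mem (lie_actWord_mem_of_mem_span_belowRank ih (lie_mem_span_belowRank hx a))
      (lie_mem_wordFiltrationLT V w a (ih x hx))

theorem lieSubSmul_mem_wordFiltrationLT (hw : IsWhittakerVector V ψ w) {x : nPlus V}
    (hx : (x : V) ∈ gens V) {p : ℕ ×ₗ ℕ} {v : W} (hv : v ∈ wordFiltration V w p) :
    lieSubSmul V ψ x v ∈ wordFiltrationLT V w p := by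
  have : wordFiltration V w p ≤ (wordFiltrationLT V w p).comap (lieSubSmul V ψ x) := by
    refine Submodule.span_le.2 ?_
    rintro _ ⟨l, hl : wordRank l ≤ p, rfl⟩
    exact wordFiltrationLT_mono V w hl (lieSubSmul_actWord_mem_wordFiltrationLT hw l x hx)
  exact this hv

theorem span_actWord_eq_top (hw : IsWhittakerVector V ψ w)
    (hgen : LieSubmodule.lieSpan ℂ V {w} = ⊤) :
    Submodule.span ℂ (Set.range (actWord V w)) = ⊤ := by
  have hbasis (i : ℤ ⊕ ℤ ⊕ Fin 3) (v : W) (hv : v ∈ Set.range (actWord V w)) :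
      ⁅(basis i : V), v⁆ ∈ Submodule.span ℂ (Set.range (actWord V w)) := by
    obtain ⟨l, rfl⟩ := hv
    rcases basis_eq_toV_or_mem_gens V i with ⟨a, ha⟩ | hx
    · rw [ha]
      exact Submodule.subset_span ⟨a :: l, rfl⟩
    · rw [lie_eq_lieSubSmul_add V ψ ⟨_, mem_nPlus_of_mem_gens V hx⟩]
      refine add_mem ?_ (Submodule.smul_mem _ _ (Submodule.subset_span ⟨l, rfl⟩))
      exact Submodule.span_mono (Set.image_subset_range _ _)
        (lieSubSmul_actWord_mem_wordFiltrationLT hw l _ hx)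
  let N : LieSubmodule ℂ V W :=
    { Submodule.span ℂ (Set.range (actWord V w)) with
      lie_mem := fun hv => lie_mem_span_of_basis basis hbasis _ hv }
  have hwN : LieSubmodule.lieSpan ℂ V {w} ≤ N :=
    LieSubmodule.lieSpan_le.2 (Set.singleton_subset_iff.2 (Submodule.subset_span ⟨[], rfl⟩))
  rw [hgen, top_le_iff] at hwN
  exact congrArg LieSubmodule.toSubmodule hwN

theorem exists_mem_wordFiltration (hw : IsWhittakerVector V ψ w)
    (hgen : LieSubmodule.lieSpan ℂ V {w} = ⊤) (v : W) : ∃ p, v ∈ wordFiltration V w p := by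
  have hle : Submodule.span ℂ (Set.range (actWord V w)) ≤ ⨆ p, wordFiltration V w p :=
    Submodule.span_le.2 fun _ ⟨l, hl⟩ => hl ▸ Submodule.mem_iSup_of_mem (wordRank l)
      (actWord_mem_wordFiltration V w le_rfl)
  rw [span_actWord_eq_top hw hgen, top_le_iff] at hle
  exact (Submodule.mem_iSup_of_directed _ (wordFiltration_mono V w).directed_le).1
    (hle ▸ Submodule.mem_top)

end Words

end THV

open THV in
theorem exists_whittaker_vector_of_submodule_general
    (V : Type) [LieRing V] [LieAlgebra ℂ V] [THV V]
    (ψ : nPlus V →ₗ⁅ℂ⁆ ℂ)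
    (W : Type) [AddCommGroup W] [Module ℂ W] [LieRingModule V W] [LieModule ℂ V W]
    (wc : W) (hwc : IsWhittakerVector V ψ wc)
    (hgen : LieSubmodule.lieSpan ℂ V {wc} = ⊤)
    (S : LieSubmodule ℂ V W) (hS : S ≠ ⊥) :
    ∃ w' ∈ S, w' ≠ 0 ∧ IsWhittakerVector V ψ w' := by
  obtain ⟨v, hvS, hv0, hv⟩ := exists_ne_zero_forall_eq_zero_of_lowering
    (fun p => (wordFiltration V wc p : Set W))
    (fun x : {x : nPlus V // (x : V) ∈ gens V} => lieSubSmul V ψ x.1) (S := (S : Set W))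
    (Submodule.exists_mem_ne_zero_of_ne_bot (by simpa using hS))
    (fun v _ => exists_mem_wordFiltration hwc hgen v)
    (fun x v hv => S.sub_mem (S.lie_mem hv) (S.smul_mem _ hv))
    (fun x _ _ hv => eq_zero_or_exists_lt_of_mem_wordFiltrationLT V wc
      (lieSubSmul_mem_wordFiltrationLT hwc x.2 hv))
  refine ⟨v, hvS, hv0, LieSubalgebra.lie_eq_smul_of_forall_mem_lieSpan ψ fun x hx => ?_⟩
  exact sub_eq_zero.1 (hv ⟨⟨x, mem_nPlus_of_mem_gens V hx⟩, hx⟩)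

open THV in
/-- every nonzero submodule of a Whittaker module contains a nonzero Whittaker
vector. -/
theorem exists_whittaker_vector_of_submodule
    (V : Type) [LieRing V] [LieAlgebra ℂ V] [THV V]
    (ψ : nPlus V →ₗ⁅ℂ⁆ ℂ)
    (hL1 : ψ ⟨THV.L 1, L_mem_nPlus V le_rfl⟩ ≠ 0)
    (hL2 : ψ ⟨THV.L 2, L_mem_nPlus V one_le_two⟩ ≠ 0)
    (hI1 : ψ ⟨THV.I 1, I_mem_nPlus V le_rfl⟩ ≠ 0)
    (W : Type) [AddCommGroup W] [Module ℂ W] [LieRingModule V W] [LieModule ℂ V W]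
    (wc : W) (hwc : IsWhittakerVector V ψ wc)
    (hgen : LieSubmodule.lieSpan ℂ V {wc} = ⊤)
    (S : LieSubmodule ℂ V W) (hS : S ≠ ⊥) :
    ∃ w' ∈ S, w' ≠ 0 ∧ IsWhittakerVector V ψ w' :=
  exists_whittaker_vector_of_submodule_general V ψ W wc hwc hgen S hS
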